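/- arXiv:2503.22883 — 4 statements merged into one kernel-verified Lean document; each statement's English description precedes it below -/
import Mathlib

section
/- The characteristic function χ^{(L,R)} of a factorization system (L,R) on a finite lattice P is a monotone endomorphism of P. -/
/-- A (weak = orthogonal) factorization system on a poset `P`, viewed as a thin category:
a pair of classes of relations `(L, R)` refining `≤` such that every relation factors as a
left relation followed by a right relation, and `L = ᗮR`, `R = Lᗮ` with respect to the
lifting property. -/
structure FacSys (P : Type*) [PartialOrder P] where
  L : P → P → Prop
  R : P → P → Prop
  L_le : ∀ {x y}, L x y → x ≤ y
  R_le : ∀ {x y}, R x y → x ≤ y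
  fact : ∀ {x y}, x ≤ y → ∃ z, L x z ∧ R z y
  L_iff : ∀ x y, L x y ↔ x ≤ y ∧ ∀ a b, R a b → x ≤ a → y ≤ b → y ≤ a
  R_iff : ∀ x y, R x y ↔ x ≤ y ∧ ∀ a b, L a b → a ≤ x → b ≤ y → b ≤ x

theorem FacSys.le_of_L_of_R {P : Type*} [PartialOrder P] (F : FacSys P) {a b c d : P}
    (hL : F.L a b) (hR : F.R c d) (hac : a ≤ c) (hbd : b ≤ d) : b ≤ c :=
  ((F.L_iff a b).mp hL).2 c d hR hac hbd

theorem stmt3_general {P : Type*} [Lattice P] [BoundedOrder P] (F : FacSys P)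
    (chi : P → P) (hchi : ∀ x, F.L ⊥ (chi x) ∧ F.R (chi x) x) :
    Monotone chi := by
  intro x y hxy
  -- lift `⊥ L χ x` against `χ y R y` in the square `⊥ ≤ χ y`, `χ x ≤ x ≤ y`
  exact F.le_of_L_of_R (hchi x).1 (hchi y).2 bot_le ((F.R_le (hchi x).2).trans hxy)

/-- The characteristic function of a factorization system on a finite bounded lattice
is a monotone endomorphism. -/
theorem stmt3 {P : Type*} [Lattice P] [BoundedOrder P] [Finite P] (F : FacSys P)
    (chi : P → P) (hchi : ∀ x, F.L ⊥ (chi x) ∧ F.R (chi x) x) :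
    Monotone chi :=
  stmt3_general F chi hchi
end

section
/- For any factorization system (L,R) on a finite lattice P, the cocharacteristic function λ^{(L,R)} is a closure operator: it is monotone, extensive (x ≤ λ(x)), and idempotent (λ(λ(x)) = λ(x)). -/
namespace FacSys

variable {P : Type*} [PartialOrder P] [OrderTop P] (F : FacSys P)

theorem le_of_L_of_R_top {x y z : P} (hL : F.L x y) (hR : F.R z ⊤) (hxz : x ≤ z) : y ≤ z :=
  ((F.L_iff x y).1 hL).2 z ⊤ hR hxz le_top

variable {F} {lam : P → P}

theorem monotone_of_L_of_R_top (hL : ∀ x, F.L x (lam x)) (hR : ∀ x, F.R (lam x) ⊤) :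
    Monotone lam := fun _ y hxy =>
  F.le_of_L_of_R_top (hL _) (hR y) (hxy.trans (F.L_le (hL y)))

theorem idempotent_of_L_of_R_top (hL : ∀ x, F.L x (lam x)) (hR : ∀ x, F.R (lam x) ⊤)
    (x : P) : lam (lam x) = lam x :=
  (F.le_of_L_of_R_top (hL _) (hR x) le_rfl).antisymm (F.L_le (hL _))

end FacSys

theorem stmt5_general {P : Type*} [Lattice P] [BoundedOrder P] (F : FacSys P)
    (lam : P → P) (hlam : ∀ x, F.L x (lam x) ∧ F.R (lam x) ⊤) :
    Monotone lam ∧ (∀ x, x ≤ lam x) ∧ (∀ x, lam (lam x) = lam x) :=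
  ⟨FacSys.monotone_of_L_of_R_top (fun x => (hlam x).1) (fun x => (hlam x).2),
    fun x => F.L_le (hlam x).1,
    FacSys.idempotent_of_L_of_R_top (fun x => (hlam x).1) (fun x => (hlam x).2)⟩

/-- The cocharacteristic function of any factorization system on a finite bounded lattice
is a closure operator: monotone, extensive, and idempotent. -/
theorem stmt5 {P : Type*} [Lattice P] [BoundedOrder P] [Finite P] (F : FacSys P)
    (lam : P → P) (hlam : ∀ x, F.L x (lam x) ∧ F.R (lam x) ⊤) :
    Monotone lam ∧ (∀ x, x ≤ lam x) ∧ (∀ x, lam (lam x) = lam x) :=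
  stmt5_general F lam hlam
end

section
/- If (L,R) and (L',R') are factorization systems on a finite lattice P with λ^{(L,R)} = λ^{(L',R')}, then the meet (L,R) ∧ (L',R') = (⊥(R∩R'), R∩R') in Fac(P) has the same cocharacteristic function: λ^{(L,R)∧(L',R')} = λ^{(L,R)}. -/
namespace FacSys

variable {P : Type*} [PartialOrder P]

theorem eq_of_factorizations (F : FacSys P) {x y y' z : P}
    (hL : F.L x y) (hR : F.R y z) (hL' : F.L x y') (hR' : F.R y' z) : y = y' :=
  le_antisymm
    (((F.L_iff x y).1 hL).2 y' z hR' (F.L_le hL') (F.R_le hR))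
    (((F.L_iff x y').1 hL').2 y z hR (F.L_le hL) (F.R_le hR'))

theorem L_of_R_subset {F G : FacSys P} (hRG : ∀ a b, G.R a b → F.R a b) {x y : P}
    (h : F.L x y) : G.L x y := by
  rw [G.L_iff]
  exact ⟨F.L_le h, fun a b hab => ((F.L_iff x y).1 h).2 a b (hRG a b hab)⟩

end FacSys

theorem stmt7_general {P : Type*} [Lattice P] [BoundedOrder P]
    (F F' FM : FacSys P) (hM : ∀ a b, FM.R a b ↔ F.R a b ∧ F'.R a b)
    (lam lam' lamM : P → P)
    (hlam : ∀ x, F.L x (lam x) ∧ F.R (lam x) ⊤)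
    (hlam' : ∀ x, F'.L x (lam' x) ∧ F'.R (lam' x) ⊤)
    (hlamM : ∀ x, FM.L x (lamM x) ∧ FM.R (lamM x) ⊤)
    (heq : lam = lam') :
    lamM = lam := by
  subst heq
  funext x
  have hLM : FM.L x (lam x) :=
    FacSys.L_of_R_subset (fun a b hab => ((hM a b).1 hab).1) (hlam x).1
  have hRM : FM.R (lam x) ⊤ := (hM _ _).2 ⟨(hlam x).2, (hlam' x).2⟩
  exact FM.eq_of_factorizations (hlamM x).1 (hlamM x).2 hLM hRM

/-- If two factorization systems have the same cocharacteristic function, then so does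
their meet in `Fac(P)`, whose right class is `R ∩ R'`. -/
theorem stmt7 {P : Type*} [Lattice P] [BoundedOrder P] [Finite P]
    (F F' FM : FacSys P) (hM : ∀ a b, FM.R a b ↔ F.R a b ∧ F'.R a b)
    (lam lam' lamM : P → P)
    (hlam : ∀ x, F.L x (lam x) ∧ F.R (lam x) ⊤)
    (hlam' : ∀ x, F'.L x (lam' x) ∧ F'.R (lam' x) ⊤)
    (hlamM : ∀ x, FM.L x (lamM x) ∧ FM.R (lamM x) ⊤)
    (heq : lam = lam') :
    lamM = lam :=
  stmt7_general F F' FM hM lam lam' lamM hlam hlam' hlamM heq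
end

section
/- If (L,R) and (L',R') are factorization systems on a finite lattice P with λ^{(L,R)} = λ^{(L',R')}, then their join in Fac(P) also satisfies λ^{(L,R)∨(L',R')} = λ^{(L,R)}; hence each fiber of λ is an interval in Fac(P). -/
section aux
variable {P : Type*} [Lattice P]

lemma FacSys.R_refl (F : FacSys P) (x : P) : F.R x x := by
  rw [F.R_iff]; exact ⟨le_rfl, fun a b _ _ hb => hb⟩

lemma FacSys.R_trans (F : FacSys P) {x y z : P} (h1 : F.R x y) (h2 : F.R y z) :
    F.R x z := by
  rw [F.R_iff]
  refine ⟨(F.R_le h1).trans (F.R_le h2), fun a b hL ha hb => ?_⟩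
  have hby : b ≤ y := ((F.L_iff a b).1 hL).2 y z h2 (ha.trans (F.R_le h1)) hb
  exact ((F.L_iff a b).1 hL).2 x y h1 ha hby

lemma FacSys.R_res (F : FacSys P) {x y c : P} (h : F.R x y) (hc : c ≤ y) :
    F.R (x ⊓ c) c := by
  rw [F.R_iff]
  refine ⟨inf_le_right, fun a b hL ha hb => ?_⟩
  have hbx : b ≤ x := ((F.L_iff a b).1 hL).2 x y h (ha.trans inf_le_left) (hb.trans hc)
  exact le_inf hbx hb

variable [BoundedOrder P]

lemma lam_min (F : FacSys P) {lam : P → P}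
    (hlam : ∀ x, F.L x (lam x) ∧ F.R (lam x) ⊤) {x y : P} (hxy : x ≤ y)
    (hy : F.R y ⊤) : lam x ≤ y :=
  ((F.L_iff x (lam x)).1 (hlam x).1).2 y ⊤ hy hxy le_top

lemma lam_le_self (F : FacSys P) {lam : P → P}
    (hlam : ∀ x, F.L x (lam x) ∧ F.R (lam x) ⊤) {x : P} (hx : F.R x ⊤) :
    lam x = x :=
  le_antisymm (lam_min F hlam le_rfl hx) (F.L_le (hlam x).1)

variable [Finite P]

lemma exists_minimal_wrt_aux {α β : Type*} [PartialOrder β] (f : α → β) (s : Set α)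
    (h : s.Finite) (hs : s.Nonempty) : ∃ a ∈ s, ∀ a' ∈ s, f a' ≤ f a → f a = f a' := by
  obtain ⟨a, ha, hmin⟩ := h.exists_minimalFor f s hs
  exact ⟨a, ha, fun a' ha' hle => le_antisymm (hmin ha' hle) hle⟩

/-- Build a factorization system from a transfer system. -/
def mkFac (R : P → P → Prop) (hrefl : ∀ x, R x x) (hle : ∀ {x y}, R x y → x ≤ y)
    (htrans : ∀ {x y z}, R x y → R y z → R x z)
    (hres : ∀ {x y c}, R x y → c ≤ y → R (x ⊓ c) c) : FacSys P where
  L x y := x ≤ y ∧ ∀ a b, R a b → x ≤ a → y ≤ b → y ≤ a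
  R := R
  L_le h := h.1
  R_le := hle
  fact := by
    intro x y hxy
    set S : Set P := {w | x ≤ w ∧ R w y} with hS
    have hyS : y ∈ S := ⟨hxy, hrefl y⟩
    obtain ⟨m, hmS, hmin⟩ := exists_minimal_wrt_aux id S (Set.toFinite S) ⟨y, hyS⟩
    have hmle : ∀ w ∈ S, m ≤ w := by
      intro w hw
      have h1 : R (m ⊓ w) w := hres hmS.2 (hle hw.2)
      have h2 : (m ⊓ w) ∈ S := ⟨le_inf hmS.1 hw.1, htrans h1 hw.2⟩
      have := hmin _ h2 inf_le_left
      simp only [id] at this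
      exact this.trans_le inf_le_right
    refine ⟨m, ⟨hmS.1, fun a b hab ha hb => ?_⟩, hmS.2⟩
    have h1 : R (a ⊓ m) m := hres hab hb
    have h2 : (a ⊓ m) ∈ S := ⟨le_inf ha hmS.1, htrans h1 hmS.2⟩
    exact (hmle _ h2).trans inf_le_left
  L_iff x y := Iff.rfl
  R_iff x y := by
    constructor
    · intro h
      refine ⟨hle h, fun a b hL ha hb => ?_⟩
      have h1 : R (x ⊓ b) b := hres h hb
      exact le_inf (hL.2 _ _ h1 (le_inf ha (hL.1)) le_rfl |>.trans inf_le_left) le_rfl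
        |>.trans inf_le_left
    · intro ⟨hxy, h⟩
      -- factor x ≤ y
      set S : Set P := {w | x ≤ w ∧ R w y} with hS
      have hyS : y ∈ S := ⟨hxy, hrefl y⟩
      obtain ⟨m, hmS, hmin⟩ := exists_minimal_wrt_aux id S (Set.toFinite S) ⟨y, hyS⟩
      have hmle : ∀ w ∈ S, m ≤ w := by
        intro w hw
        have h1 : R (m ⊓ w) w := hres hmS.2 (hle hw.2)
        have h2 : (m ⊓ w) ∈ S := ⟨le_inf hmS.1 hw.1, htrans h1 hw.2⟩
        have := hmin _ h2 inf_le_left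
        simp only [id] at this
        exact this.trans_le inf_le_right
      have hLxm : x ≤ m ∧ ∀ a b, R a b → x ≤ a → m ≤ b → m ≤ a := by
        refine ⟨hmS.1, fun a b hab ha hb => ?_⟩
        have h1 : R (a ⊓ m) m := hres hab hb
        have h2 : (a ⊓ m) ∈ S := ⟨le_inf ha hmS.1, htrans h1 hmS.2⟩
        exact (hmle _ h2).trans inf_le_left
      have hmx : m ≤ x := h x m hLxm le_rfl (hle hmS.2)
      have : m = x := le_antisymm hmx hmS.1
      rw [← this]; exact hmS.2
end aux


/-- If two factorization systems have the same cocharacteristic function, then so does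
their join in `Fac(P)` (the least factorization system whose right class contains both
right classes); consequently each fiber of `λ` is an interval in `Fac(P)`: any
factorization system lying between two members of a fiber is again in that fiber. -/
theorem stmt8 {P : Type*} [Lattice P] [BoundedOrder P] [Finite P]
    (F F' FJ : FacSys P)
    (hJ1 : ∀ a b, F.R a b → FJ.R a b) (hJ2 : ∀ a b, F'.R a b → FJ.R a b)
    (hJleast : ∀ G : FacSys P, (∀ a b, F.R a b → G.R a b) →
      (∀ a b, F'.R a b → G.R a b) → ∀ a b, FJ.R a b → G.R a b)
    (lam lam' lamJ : P → P)
    (hlam : ∀ x, F.L x (lam x) ∧ F.R (lam x) ⊤)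
    (hlam' : ∀ x, F'.L x (lam' x) ∧ F'.R (lam' x) ⊤)
    (hlamJ : ∀ x, FJ.L x (lamJ x) ∧ FJ.R (lamJ x) ⊤)
    (heq : lam = lam') :
    lamJ = lam ∧
      ∀ (G : FacSys P) (lamG : P → P),
        (∀ x, G.L x (lamG x) ∧ G.R (lamG x) ⊤) →
        (∀ a b, F.R a b → G.R a b) → (∀ a b, G.R a b → F'.R a b) →
        lamG = lam := by
  -- the common top-fiber set
  have hSS : ∀ s, F.R s ⊤ ↔ F'.R s ⊤ := by
    intro s
    constructor
    · intro h
      have h1 : lam s = s := lam_le_self F hlam h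
      have h2 : lam' s = s := by rw [← heq]; exact h1
      have := (hlam' s).2; rwa [h2] at this
    · intro h
      have h1 : lam' s = s := lam_le_self F' hlam' h
      have h2 : lam s = s := by rw [heq]; exact h1
      have := (hlam s).2; rwa [h2] at this
  -- the maximal factorization system with this fiber
  set RG : P → P → Prop := fun a b => a ≤ b ∧ ∀ s, F.R s ⊤ → s ≤ b → F.R (a ⊓ s) ⊤
    with hRG
  have hrefl : ∀ x, RG x x := by
    intro x
    refine ⟨le_rfl, fun s hs hsx => ?_⟩
    rw [inf_of_le_right hsx]; exact hs
  have hle : ∀ {x y}, RG x y → x ≤ y := fun h => h.1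
  have htrans : ∀ {x y z}, RG x y → RG y z → RG x z := by
    intro x y z h1 h2
    refine ⟨h1.1.trans h2.1, fun s hs hsz => ?_⟩
    have hys : F.R (y ⊓ s) ⊤ := h2.2 s hs hsz
    have := h1.2 (y ⊓ s) hys inf_le_left
    rwa [← inf_assoc, inf_of_le_left h1.1] at this
  have hres : ∀ {x y c}, RG x y → c ≤ y → RG (x ⊓ c) c := by
    intro x y c h hc
    refine ⟨inf_le_right, fun s hs hsc => ?_⟩
    have h2 := h.2 s hs (hsc.trans hc)
    have h3 : x ⊓ c ⊓ s = x ⊓ s := by rw [inf_assoc, inf_eq_right.2 hsc]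
    rwa [h3]
  -- F.R ⊆ RG and F'.R ⊆ RG
  have hsub : ∀ (H : FacSys P), (∀ s, H.R s ⊤ ↔ F.R s ⊤) → ∀ a b, H.R a b → RG a b := by
    intro H hH a b hab
    refine ⟨H.R_le hab, fun s hs hsb => ?_⟩
    have h1 : H.R (a ⊓ s) s := H.R_res hab hsb
    have h2 : H.R s ⊤ := (hH s).2 hs
    exact (hH _).1 (H.R_trans h1 h2)
  have hGtop : ∀ a, RG a ⊤ → F.R a ⊤ := by
    intro a h
    have := h.2 ⊤ (F.R_refl ⊤) le_rfl
    simpa using this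
  set G : FacSys P := mkFac RG hrefl hle htrans hres with hG
  have hGR : G.R = RG := rfl
  have hFJ : ∀ a b, FJ.R a b → RG a b := by
    intro a b h
    have := hJleast G (fun a b hab => hsub F (fun _ => Iff.rfl) a b hab)
      (fun a b hab => hsub F' (fun s => (hSS s).symm) a b hab) a b h
    rwa [hGR] at this
  constructor
  · funext x
    apply le_antisymm
    · exact lam_min FJ hlamJ (F.L_le (hlam x).1) (hJ1 _ _ (hlam x).2)
    · have h1 : F.R (lamJ x) ⊤ := hGtop _ (hFJ _ _ (hlamJ x).2)
      exact lam_min F hlam (FJ.L_le (hlamJ x).1) h1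
  · intro G' lamG hlamG hFG hGF'
    funext x
    apply le_antisymm
    · exact lam_min G' hlamG (F.L_le (hlam x).1) (hFG _ _ (hlam x).2)
    · have h1 : F'.R (lamG x) ⊤ := hGF' _ _ (hlamG x).2
      have := lam_min F' hlam' (G'.L_le (hlamG x).1) h1
      rwa [← heq] at this
end
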